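/- Let G ⊆ F be a sub-σ-algebra, h an L-bounded normal integrand on ℝⁿ, and ĥ a B(ℝⁿ)⊗G-measurable normal integrand. If ĥ(x(ω),ω) = E^G[h(x(·),·)](ω) for a.e. ω holds for every bounded G-measurable x : Ω → ℝⁿ, then ĥ is a G-conditional expectation of h, i.e., the same identity holds for every G-measurable x : Ω → ℝⁿ for which ω ↦ h(x(ω),ω) is quasi-integrable. In particular, if ω ↦ h(x(ω),ω) is G-measurable for every bounded G-measurable x, then h itself is a G-conditional expectation of h. -/

import Mathlib

open MeasureTheory ENNReal
open scoped RealInnerProductSpace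

noncomputable section

namespace PaperDP

variable {Ω : Type*}

/-- The positive part of an extended real number, as an element of `ℝ≥0∞`. -/
def ePos (x : EReal) : ℝ≥0∞ := if x = ⊤ then ⊤ else ENNReal.ofReal x.toReal

/-- The extended integral of an extended-real-valued function: it is `+∞` unless the
positive part of the integrand is integrable, in which case it is the difference of the
integrals of the positive and negative parts. -/
def EInt {mΩ : MeasurableSpace Ω} (μ : Measure Ω) (ξ : Ω → EReal) : EReal :=
  if (∫⁻ ω, ePos (ξ ω) ∂μ) = ⊤ then ⊤
  else ((∫⁻ ω, ePos (ξ ω) ∂μ : ℝ≥0∞) : EReal) - ((∫⁻ ω, ePos (-(ξ ω)) ∂μ : ℝ≥0∞) : EReal)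

/-- An extended-real-valued random variable is quasi-integrable if its positive part or
its negative part is integrable. -/
def QuasiIntegrable {mΩ : MeasurableSpace Ω} (μ : Measure Ω) (ξ : Ω → EReal) : Prop :=
  (∫⁻ ω, ePos (ξ ω) ∂μ) ≠ ⊤ ∨ (∫⁻ ω, ePos (-(ξ ω)) ∂μ) ≠ ⊤

/-- `ξ'` is a version of the `G`-conditional expectation of the extended-real random
variable `ξ`: it is `G`-measurable and satisfies `E[α ξ'] = E[α ξ]` for every bounded
nonnegative `G`-measurable real `α`. -/
def IsCondExpER {mΩ : MeasurableSpace Ω} (μ : Measure Ω) (G : MeasurableSpace Ω)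
    (ξ ξ' : Ω → EReal) : Prop :=
  Measurable[G] ξ' ∧
  ∀ α : Ω → ℝ, Measurable[G] α → (∀ ω, 0 ≤ α ω) → (∃ C, ∀ ω, α ω ≤ C) →
    EInt μ (fun ω => (α ω : EReal) * ξ' ω) = EInt μ (fun ω => (α ω : EReal) * ξ ω)

/-- A normal integrand with respect to the σ-algebra `m` on `Ω`: a jointly measurable
function (with respect to `B(E) ⊗ m`) with values in `ℝ ∪ {+∞}` which is lower
semicontinuous in its first argument. -/
def IsNormalIntegrand {E : Type*} [TopologicalSpace E] [MeasurableSpace E]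
    (m : MeasurableSpace Ω) (h : E → Ω → EReal) : Prop :=
  Measurable[MeasurableSpace.prod inferInstance m] (fun p : E × Ω => h p.1 p.2) ∧
  (∀ ω, LowerSemicontinuous fun x => h x ω) ∧ ∀ x ω, h x ω ≠ ⊥

/-- `h` is L-bounded: `h(x,ω) ≥ -ρ(ω)‖x‖ - m(ω)` for integrable nonnegative `ρ, m`. -/
def LBounded {E : Type*} [NormedAddCommGroup E] {mΩ : MeasurableSpace Ω} (μ : Measure Ω)
    (h : E → Ω → EReal) : Prop :=
  ∃ ρ m : Ω → ℝ, Integrable ρ μ ∧ Integrable m μ ∧ (∀ ω, 0 ≤ ρ ω) ∧ (∀ ω, 0 ≤ m ω) ∧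
    ∀ᵐ ω ∂μ, ∀ x : E, (↑(-(ρ ω * ‖x‖ + m ω)) : EReal) ≤ h x ω

/-- `hG` is a `G`-conditional expectation of the normal integrand `h`: it is a
`B(E) ⊗ G`-measurable normal integrand such that `hG(x(·),·)` is a version of the
`G`-conditional expectation of `h(x(·),·)` for every `G`-measurable `x` for which
`h(x(·),·)` is quasi-integrable. -/
def IsCondNI {E : Type*} [TopologicalSpace E] [MeasurableSpace E] {mΩ : MeasurableSpace Ω}
    (μ : Measure Ω) (G : MeasurableSpace Ω) (h hG : E → Ω → EReal) : Prop :=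
  IsNormalIntegrand G hG ∧
  ∀ x : Ω → E, Measurable[G] x → QuasiIntegrable μ (fun ω => h (x ω) ω) →
    IsCondExpER μ G (fun ω => h (x ω) ω) (fun ω => hG (x ω) ω)

/-- The recession function of `g`: `g^∞(y) = sup_{r>0} (g(z + r y) - g(z))/r`, where `z`
is any point with `g(z) < ∞` (for a proper lsc convex function the value does not depend
on the choice of `z`; we take the infimum over all such `z`). -/
def recessionFn {E : Type*} [AddCommGroup E] [Module ℝ E] (g : E → EReal) (y : E) : EReal :=
  ⨅ z : {z : E // g z < ⊤}, ⨆ r : {r : ℝ // 0 < r},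
    ((r.1⁻¹ : ℝ) : EReal) * (g (z.1 + r.1 • y) - g z.1)

/-- Convexity of an extended-real-valued function. -/
def ConvexEFn {E : Type*} [AddCommGroup E] [Module ℝ E] (g : E → EReal) : Prop :=
  ∀ x y : E, ∀ a b : ℝ, 0 ≤ a → 0 ≤ b → a + b = 1 →
    g (a • x + b • y) ≤ (a : EReal) * g x + (b : EReal) * g y

/-- A convex integrand: `h(·,ω)` is convex for every `ω`. -/
def ConvexIntegrand {E : Type*} [AddCommGroup E] [Module ℝ E]
    (h : E → Ω → EReal) : Prop :=
  ∀ ω, ConvexEFn (fun x => h x ω)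


/-!
Write `ξ = h(x(·),·)`, `ζ = ĥ(x(·),·)` and `A_k = {‖x‖ ≤ k}`. The truncation `1_{A_k} x` is a
bounded `G`-measurable selection that agrees with `x` on the `G`-measurable set `A_k`, so the
hypothesis yields the conditional-expectation identity for the pair `1_{A_k} ξ, 1_{A_k} ζ`.
Testing that identity with `α 1_{ζ > 0}` (resp. `α 1_{ζ < 0}`) shows that the positive (resp.
negative) part of `α 1_{A_k} ζ` integrates to at most that of `α 1_{A_k} ξ`. Hence, when `ξ` is
quasi-integrable, both sides of `E[α 1_{A_k} ζ] = E[α 1_{A_k} ξ]` have finite positive parts or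
both have finite negative parts, so these identities are equalities of sums in `[0, ∞]`, which
pass to the limit `k → ∞` by monotone convergence. The same truncation shows that `h(x(·),·)` is
`G`-measurable as the pointwise eventually constant limit of `h(1_{A_k} x(·),·)`.
-/

open Set Filter

def posSubNeg (a b : ℝ≥0∞) : EReal := if a = ⊤ then ⊤ else (a : EReal) - b

section PosSubNeg

lemma posSubNeg_le (a b : ℝ≥0∞) : posSubNeg a b ≤ a := by
  unfold posSubNeg
  split_ifs with ha
  · simp [ha]
  · simpa using EReal.sub_le_sub (le_refl (a : EReal)) (EReal.coe_ennreal_nonneg b)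

lemma neg_le_posSubNeg (a b : ℝ≥0∞) : -(b : EReal) ≤ posSubNeg a b := by
  unfold posSubNeg
  split_ifs
  · exact le_top
  · simpa using EReal.sub_le_sub (EReal.coe_ennreal_nonneg a) (le_refl (b : EReal))

lemma posSubNeg_zero_right (a : ℝ≥0∞) : posSubNeg a 0 = a := by
  unfold posSubNeg
  split_ifs with ha <;> simp [ha]

lemma posSubNeg_zero_left (b : ℝ≥0∞) : posSubNeg 0 b = -b := by
  simp [posSubNeg]

lemma posSubNeg_eq_posSubNeg_iff {a b c d : ℝ≥0∞}
    (h : (a ≠ ⊤ ∧ c ≠ ⊤) ∨ (b ≠ ⊤ ∧ d ≠ ⊤)) :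
    posSubNeg a b = posSubNeg c d ↔ a + d = c + b := by
  induction a using ENNReal.recTopCoe <;> induction b using ENNReal.recTopCoe <;>
    induction c using ENNReal.recTopCoe <;> induction d using ENNReal.recTopCoe <;>
    simp_all [posSubNeg, EReal.coe_nnreal_eq_coe_real, ← EReal.coe_sub, ← ENNReal.coe_add]
  rw [sub_eq_sub_iff_add_eq_add, ← NNReal.coe_inj, NNReal.coe_add, NNReal.coe_add]

lemma posSubNeg_iSup_eq_of_forall_eq {a b c d : ℕ → ℝ≥0∞} (ha : Monotone a) (hb : Monotone b)
    (hc : Monotone c) (hd : Monotone d) (hac : ∀ k, a k ≤ c k) (hbd : ∀ k, b k ≤ d k)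
    (hfin : ⨆ k, c k ≠ ⊤ ∨ ⨆ k, d k ≠ ⊤)
    (heq : ∀ k, posSubNeg (a k) (b k) = posSubNeg (c k) (d k)) :
    posSubNeg (⨆ k, a k) (⨆ k, b k) = posSubNeg (⨆ k, c k) (⨆ k, d k) := by
  have fin_of {a' b' c' d' : ℝ≥0∞} (hac' : a' ≤ c') (hbd' : b' ≤ d') (hc' : c' ≤ ⨆ k, c k)
      (hd' : d' ≤ ⨆ k, d k) : (a' ≠ ⊤ ∧ c' ≠ ⊤) ∨ (b' ≠ ⊤ ∧ d' ≠ ⊤) :=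
    hfin.imp (fun h => ⟨ne_top_of_le_ne_top h (hac'.trans hc'), ne_top_of_le_ne_top h hc'⟩)
      (fun h => ⟨ne_top_of_le_ne_top h (hbd'.trans hd'), ne_top_of_le_ne_top h hd'⟩)
  rw [posSubNeg_eq_posSubNeg_iff (fin_of (iSup_mono hac) (iSup_mono hbd) le_rfl le_rfl),
    ENNReal.iSup_add_iSup_of_monotone ha hd, ENNReal.iSup_add_iSup_of_monotone hc hb]
  exact iSup_congr fun k => (posSubNeg_eq_posSubNeg_iff
    (fin_of (hac k) (hbd k) (le_iSup c k) (le_iSup d k))).1 (heq k)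

end PosSubNeg

section ePos

@[simp] lemma ePos_zero : ePos 0 = 0 := by simp [ePos]

lemma ePos_of_nonpos {z : EReal} (hz : z ≤ 0) : ePos z = 0 := by
  induction z using EReal.rec with
  | bot => simp [ePos]
  | coe r => simp [ePos, ENNReal.ofReal_eq_zero.2 (EReal.coe_nonpos.1 hz)]
  | top => exact absurd hz (by simp)

lemma ePos_coe_mul {c : ℝ} (hc : 0 ≤ c) (z : EReal) :
    ePos (c * z) = ENNReal.ofReal c * ePos z := by
  rcases hc.eq_or_lt with rfl | hc
  · simp
  induction z using EReal.rec with
  | bot => simp [EReal.coe_mul_bot_of_pos hc, ePos]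
  | coe r => simp [ePos, ← EReal.coe_mul, ENNReal.ofReal_mul hc.le]
  | top => simp [EReal.coe_mul_top_of_pos hc, ePos, hc]

lemma measurable_ePos : Measurable ePos :=
  Measurable.ite (measurableSet_singleton ⊤) measurable_const
    measurable_ereal_toReal.ennreal_ofReal

end ePos

section PosLIntegral

variable {mΩ : MeasurableSpace Ω} {μ : Measure Ω} {α : Ω → ℝ} {f : Ω → EReal}

def posLIntegral (μ : Measure Ω) (α : Ω → ℝ) (f : Ω → EReal) : ℝ≥0∞ :=
  ∫⁻ ω, ENNReal.ofReal (α ω) * ePos (f ω) ∂μ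

lemma EInt_coe_mul (hα : ∀ ω, 0 ≤ α ω) (f : Ω → EReal) :
    EInt μ (fun ω => (α ω : EReal) * f ω) =
      posSubNeg (posLIntegral μ α f) (posLIntegral μ α (-f)) := by
  simp only [EInt, posSubNeg, posLIntegral, Pi.neg_apply, ← mul_neg, ePos_coe_mul (hα _)]
  rfl

lemma posLIntegral_indicator (s : Set Ω) :
    posLIntegral μ α (s.indicator f) =
      ∫⁻ ω, s.indicator (fun ω => ENNReal.ofReal (α ω) * ePos (f ω)) ω ∂μ := by
  refine lintegral_congr fun ω => ?_
  by_cases hω : ω ∈ s <;> simp [hω]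

lemma posLIntegral_indicator_mono {s t : Set Ω} (hst : s ⊆ t) :
    posLIntegral μ α (s.indicator f) ≤ posLIntegral μ α (t.indicator f) := by
  simp only [posLIntegral_indicator]
  exact lintegral_mono (indicator_le_indicator_of_subset hst fun _ => zero_le)

lemma iSup_posLIntegral_indicator (hα : Measurable α) (hf : Measurable f) {A : ℕ → Set Ω}
    (hA : ∀ k, MeasurableSet (A k)) (hmono : Monotone A) (hcover : ⋃ k, A k = univ) :
    ⨆ k, posLIntegral μ α ((A k).indicator f) = posLIntegral μ α f := by
  set g : Ω → ℝ≥0∞ := fun ω => ENNReal.ofReal (α ω) * ePos (f ω)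
  have hg : Measurable g := hα.ennreal_ofReal.mul (measurable_ePos.comp hf)
  have hsup : ⨆ k, (A k).indicator g = g := by
    rw [iSup_indicator bot_eq_zero monotone_const hmono, hcover, indicator_univ, iSup_const]
  simp only [posLIntegral_indicator]
  rw [← lintegral_iSup (fun k => hg.indicator (hA k))
    (fun i j hij => indicator_le_indicator_of_subset (hmono hij) fun _ => zero_le)]
  exact lintegral_congr fun ω => by simpa only [iSup_apply] using congrFun hsup ω

lemma posLIntegral_indicator_weight_le (hα : ∀ ω, 0 ≤ α ω) (s : Set Ω) :
    posLIntegral μ (s.indicator α) f ≤ posLIntegral μ α f :=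
  lintegral_mono fun ω => by
    gcongr
    exact indicator_le_self' (fun ω _ => hα ω) ω

lemma posLIntegral_le_mul {C : ℝ} (hC : ∀ ω, α ω ≤ C) :
    posLIntegral μ α f ≤ ENNReal.ofReal C * ∫⁻ ω, ePos (f ω) ∂μ := by
  rw [← lintegral_const_mul' _ _ ENNReal.ofReal_ne_top]
  exact lintegral_mono fun ω => by gcongr; exact hC ω

lemma QuasiIntegrable.posLIntegral_ne_top (hf : QuasiIntegrable μ f) {C : ℝ}
    (hC : ∀ ω, α ω ≤ C) : posLIntegral μ α f ≠ ⊤ ∨ posLIntegral μ α (-f) ≠ ⊤ :=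
  have bound {g : Ω → EReal} (hg : ∫⁻ ω, ePos (g ω) ∂μ ≠ ⊤) : posLIntegral μ α g ≠ ⊤ :=
    ne_top_of_le_ne_top (ENNReal.mul_ne_top ENNReal.ofReal_ne_top hg) (posLIntegral_le_mul hC)
  hf.imp bound bound

end PosLIntegral

namespace IsCondExpER

variable {mΩ : MeasurableSpace Ω} {μ : Measure Ω} {G : MeasurableSpace Ω} {ξ ζ : Ω → EReal}
  {α : Ω → ℝ} {s : Set Ω}

lemma posSubNeg_indicator_eq (hξζ : IsCondExpER μ G ξ ζ) (hs : MeasurableSet[G] s)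
    (hα : Measurable[G] α) (hα0 : ∀ ω, 0 ≤ α ω) (hαC : ∃ C, ∀ ω, α ω ≤ C) :
    posSubNeg (posLIntegral μ (s.indicator α) ζ) (posLIntegral μ (s.indicator α) (-ζ)) =
      posSubNeg (posLIntegral μ (s.indicator α) ξ) (posLIntegral μ (s.indicator α) (-ξ)) := by
  have hβ0 : ∀ ω, 0 ≤ s.indicator α ω := indicator_nonneg fun ω _ => hα0 ω
  obtain ⟨C, hC⟩ := hαC
  rw [← EInt_coe_mul hβ0, ← EInt_coe_mul hβ0]
  exact hξζ.2 _ (hα.indicator hs) hβ0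
    ⟨C, fun ω => (indicator_le_self' (fun ω _ => hα0 ω) ω).trans (hC ω)⟩

lemma indicator (hξζ : IsCondExpER μ G ξ ζ) (hs : MeasurableSet[G] s) :
    IsCondExpER μ G (s.indicator ξ) (s.indicator ζ) := by
  refine ⟨hξζ.1.indicator hs, fun α hα hα0 hαC => ?_⟩
  have hmul (g : Ω → EReal) : (fun ω => (α ω : EReal) * s.indicator g ω) =
      fun ω => ((s.indicator α ω : ℝ) : EReal) * g ω := by
    ext ω
    by_cases hω : ω ∈ s <;> simp [hω]
  rw [hmul, hmul, EInt_coe_mul (indicator_nonneg fun ω _ => hα0 ω),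
    EInt_coe_mul (indicator_nonneg fun ω _ => hα0 ω)]
  exact hξζ.posSubNeg_indicator_eq hs hα hα0 hαC

lemma posLIntegral_le (hξζ : IsCondExpER μ G ξ ζ) (hα : Measurable[G] α) (hα0 : ∀ ω, 0 ≤ α ω)
    (hαC : ∃ C, ∀ ω, α ω ≤ C) : posLIntegral μ α ζ ≤ posLIntegral μ α ξ := by
  set S := {ω | 0 < ζ ω}
  have hS : MeasurableSet[G] S := measurableSet_lt measurable_const hξζ.1
  have hpos : posLIntegral μ (S.indicator α) ζ = posLIntegral μ α ζ :=
    lintegral_congr fun ω => by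
      by_cases hω : ω ∈ S
      · simp [hω]
      · simp [hω, ePos_of_nonpos (not_lt.1 hω)]
  have hneg : posLIntegral μ (S.indicator α) (-ζ) = 0 :=
    (lintegral_congr fun ω => by
      by_cases hω : ω ∈ S
      · simp [ePos_of_nonpos (EReal.neg_le_zero.2 (le_of_lt hω))]
      · simp [hω]).trans lintegral_zero
  have key := hξζ.posSubNeg_indicator_eq hS hα hα0 hαC
  rw [hpos, hneg, posSubNeg_zero_right] at key
  calc posLIntegral μ α ζ ≤ posLIntegral μ (S.indicator α) ξ :=
        EReal.coe_ennreal_le_coe_ennreal_iff.1 (key ▸ posSubNeg_le _ _)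
    _ ≤ posLIntegral μ α ξ := posLIntegral_indicator_weight_le hα0 S

lemma posLIntegral_neg_le (hξζ : IsCondExpER μ G ξ ζ) (hα : Measurable[G] α)
    (hα0 : ∀ ω, 0 ≤ α ω) (hαC : ∃ C, ∀ ω, α ω ≤ C) :
    posLIntegral μ α (-ζ) ≤ posLIntegral μ α (-ξ) := by
  set S := {ω | ζ ω < 0}
  have hS : MeasurableSet[G] S := measurableSet_lt hξζ.1 measurable_const
  have hpos : posLIntegral μ (S.indicator α) ζ = 0 :=
    (lintegral_congr fun ω => by
      by_cases hω : ω ∈ S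
      · simp [ePos_of_nonpos (le_of_lt hω)]
      · simp [hω]).trans lintegral_zero
  have hneg : posLIntegral μ (S.indicator α) (-ζ) = posLIntegral μ α (-ζ) :=
    lintegral_congr fun ω => by
      by_cases hω : ω ∈ S
      · simp [hω]
      · simp [hω, ePos_of_nonpos (EReal.neg_le_zero.2 (not_lt.1 hω))]
  have key := hξζ.posSubNeg_indicator_eq hS hα hα0 hαC
  rw [hpos, hneg, posSubNeg_zero_left] at key
  calc posLIntegral μ α (-ζ) ≤ posLIntegral μ (S.indicator α) (-ξ) :=
        EReal.coe_ennreal_le_coe_ennreal_iff.1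
          (EReal.neg_le_neg_iff.1 (key ▸ neg_le_posSubNeg _ _))
    _ ≤ posLIntegral μ α (-ξ) := posLIntegral_indicator_weight_le hα0 S

end IsCondExpER

section Localization

variable {mΩ : MeasurableSpace Ω} {μ : Measure Ω} {G : MeasurableSpace Ω}

theorem isCondExpER_of_forall_indicator (hG : G ≤ mΩ) {A : ℕ → Set Ω}
    (hA : ∀ k, MeasurableSet[G] (A k)) (hmono : Monotone A) (hcover : ⋃ k, A k = univ)
    {ξ ζ : Ω → EReal} (hξ : Measurable[mΩ] ξ) (hζ : Measurable[G] ζ)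
    (hqi : QuasiIntegrable μ ξ)
    (hloc : ∀ k, IsCondExpER μ G ((A k).indicator ξ) ((A k).indicator ζ)) :
    IsCondExpER μ G ξ ζ := by
  refine ⟨hζ, fun α hα hα0 ⟨C, hC⟩ => ?_⟩
  have hαm : Measurable[mΩ] α := hα.mono hG le_rfl
  have hAm k : MeasurableSet[mΩ] (A k) := hG _ (hA k)
  have hζm : Measurable[mΩ] ζ := hζ.mono hG le_rfl
  have hmono' (f : Ω → EReal) : Monotone fun k => posLIntegral μ α ((A k).indicator f) :=
    fun i j hij => posLIntegral_indicator_mono (hmono hij)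
  have hsup {f : Ω → EReal} (hf : Measurable[mΩ] f) :=
    iSup_posLIntegral_indicator (μ := μ) hαm hf hAm hmono hcover
  have hneg (f : Ω → EReal) (k : ℕ) : -(A k).indicator f = (A k).indicator (-f) :=
    funext fun ω => by by_cases hω : ω ∈ A k <;> simp [hω]
  rw [EInt_coe_mul hα0, EInt_coe_mul hα0, ← hsup hζm, ← hsup hζm.neg, ← hsup hξ,
    ← hsup hξ.neg]
  refine posSubNeg_iSup_eq_of_forall_eq (hmono' _) (hmono' _) (hmono' _) (hmono' _)
    (fun k => ?_) (fun k => ?_) ?_ (fun k => ?_)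
  · exact (hloc k).posLIntegral_le hα hα0 ⟨C, hC⟩
  · simpa only [hneg] using (hloc k).posLIntegral_neg_le hα hα0 ⟨C, hC⟩
  · rw [hsup hξ, hsup hξ.neg]
    exact hqi.posLIntegral_ne_top hC
  · simpa only [hneg, EInt_coe_mul hα0] using (hloc k).2 α hα hα0 ⟨C, hC⟩

end Localization

section NormalIntegrand

variable {E : Type*} [NormedAddCommGroup E] {G : MeasurableSpace Ω} {x : Ω → E}

lemma IsNormalIntegrand.measurable_comp [MeasurableSpace E] {h : E → Ω → EReal}
    (hh : IsNormalIntegrand G h) (hx : Measurable[G] x) : Measurable[G] fun ω => h (x ω) ω :=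
  hh.1.comp (hx.prodMk measurable_id)

lemma measurableSet_norm_le_natCast [MeasurableSpace E] [OpensMeasurableSpace E]
    (hx : Measurable[G] x) (k : ℕ) :
    MeasurableSet[G] {ω | ‖x ω‖ ≤ k} :=
  measurableSet_le hx.norm measurable_const

lemma monotone_setOf_norm_le_natCast : Monotone fun k : ℕ => {ω | ‖x ω‖ ≤ k} :=
  fun i j hij ω (hω : ‖x ω‖ ≤ i) => show ‖x ω‖ ≤ j from hω.trans (Nat.cast_le.2 hij)

lemma iUnion_setOf_norm_le_natCast : ⋃ k : ℕ, {ω | ‖x ω‖ ≤ k} = univ :=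
  iUnion_eq_univ_iff.2 fun ω => exists_nat_ge ‖x ω‖

lemma norm_indicator_setOf_norm_le_natCast (k : ℕ) (ω : Ω) :
    ‖{ω | ‖x ω‖ ≤ k}.indicator x ω‖ ≤ k := by
  by_cases hω : ‖x ω‖ ≤ k <;> simp [hω]

theorem measurable_comp_of_forall_bounded [MeasurableSpace E] [OpensMeasurableSpace E]
    {h : E → Ω → EReal}
    (hmeas : ∀ x : Ω → E, Measurable[G] x → (∃ C, ∀ ω, ‖x ω‖ ≤ C) →
      Measurable[G] fun ω => h (x ω) ω)
    (hx : Measurable[G] x) : Measurable[G] fun ω => h (x ω) ω := by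
  have hlim : (fun ω => h (x ω) ω) =
      fun ω => liminf (fun k : ℕ => h ({ω | ‖x ω‖ ≤ k}.indicator x ω) ω) atTop := by
    funext ω
    obtain ⟨K, hK⟩ := exists_nat_ge ‖x ω‖
    refine (Tendsto.liminf_eq
      (tendsto_atTop_of_eventually_const (i₀ := K) fun k hk => ?_)).symm
    rw [indicator_of_mem (monotone_setOf_norm_le_natCast hk hK)]
  rw [hlim]
  exact Measurable.liminf fun k =>
    hmeas _ (hx.indicator (measurableSet_norm_le_natCast hx k))
      ⟨k, norm_indicator_setOf_norm_le_natCast k⟩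

theorem isCondExpER_comp_of_forall_bounded [MeasurableSpace E] [OpensMeasurableSpace E]
    {mΩ : MeasurableSpace Ω} {μ : Measure Ω} (hG : G ≤ mΩ) {h ĥ : E → Ω → EReal}
    (htest : ∀ x : Ω → E, Measurable[G] x → (∃ C, ∀ ω, ‖x ω‖ ≤ C) →
      IsCondExpER μ G (fun ω => h (x ω) ω) (fun ω => ĥ (x ω) ω))
    (hx : Measurable[G] x) (hξ : Measurable[mΩ] fun ω => h (x ω) ω)
    (hqi : QuasiIntegrable μ fun ω => h (x ω) ω) :
    IsCondExpER μ G (fun ω => h (x ω) ω) (fun ω => ĥ (x ω) ω) := by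
  refine isCondExpER_of_forall_indicator hG (measurableSet_norm_le_natCast hx)
    monotone_setOf_norm_le_natCast iUnion_setOf_norm_le_natCast
    hξ (measurable_comp_of_forall_bounded (fun y hy hyC => (htest y hy hyC).1) hx) hqi
    fun k => ?_
  have hA := measurableSet_norm_le_natCast hx k
  have hk :=
    (htest _ (hx.indicator hA) ⟨k, norm_indicator_setOf_norm_le_natCast k⟩).indicator hA
  have hcongr (g : E → Ω → EReal) :
      {ω | ‖x ω‖ ≤ k}.indicator (fun ω => g ({ω | ‖x ω‖ ≤ k}.indicator x ω) ω) =
        {ω | ‖x ω‖ ≤ k}.indicator fun ω => g (x ω) ω :=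
    indicator_congr fun ω hω => by rw [indicator_of_mem hω]
  rwa [hcongr, hcongr] at hk

end NormalIntegrand

theorem statement4_general {Ω : Type*} {mΩ : MeasurableSpace Ω} (μ : Measure Ω)
    (G : MeasurableSpace Ω) (hG : G ≤ mΩ) (n : ℕ)
    (h : EuclideanSpace ℝ (Fin n) → Ω → EReal)
    (hNI : IsNormalIntegrand mΩ h)
    (hhat : EuclideanSpace ℝ (Fin n) → Ω → EReal)
    (hhatNI : IsNormalIntegrand G hhat)
    (htest : ∀ x : Ω → EuclideanSpace ℝ (Fin n), Measurable[G] x →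
      (∃ C, ∀ ω, ‖x ω‖ ≤ C) →
      IsCondExpER μ G (fun ω => h (x ω) ω) (fun ω => hhat (x ω) ω)) :
    IsCondNI μ G h hhat ∧
    (∀ h₂ : EuclideanSpace ℝ (Fin n) → Ω → EReal,
      IsNormalIntegrand mΩ h₂ → LBounded μ h₂ →
      (∀ x : Ω → EuclideanSpace ℝ (Fin n), Measurable[G] x →
        (∃ C, ∀ ω, ‖x ω‖ ≤ C) → Measurable[G] fun ω => h₂ (x ω) ω) →
      ∀ x : Ω → EuclideanSpace ℝ (Fin n), Measurable[G] x →
        QuasiIntegrable μ (fun ω => h₂ (x ω) ω) →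
        IsCondExpER μ G (fun ω => h₂ (x ω) ω) (fun ω => h₂ (x ω) ω)) := by
  refine ⟨⟨hhatNI, fun x hx hqi => ?_⟩, fun h₂ _ _ hmeas x hx _ => ?_⟩
  · exact isCondExpER_comp_of_forall_bounded hG htest hx
      (hNI.measurable_comp (hx.mono hG le_rfl)) hqi
  · exact ⟨measurable_comp_of_forall_bounded hmeas hx, fun _ _ _ _ => rfl⟩

/-- Lemma 2.2: for an L-bounded normal integrand it suffices to test
the defining property of the conditional expectation with bounded `G`-measurable
selections.  In particular, if `h(x(·),·)` is `G`-measurable for every bounded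
`G`-measurable `x`, then `h` satisfies the defining identity of a `G`-conditional
expectation of itself. -/
theorem statement4 {Ω : Type*} {mΩ : MeasurableSpace Ω} (μ : Measure Ω)
    [IsProbabilityMeasure μ] (hcompl : μ.IsComplete)
    (G : MeasurableSpace Ω) (hG : G ≤ mΩ) (n : ℕ)
    (h : EuclideanSpace ℝ (Fin n) → Ω → EReal)
    (hNI : IsNormalIntegrand mΩ h) (hLB : LBounded μ h)
    (hhat : EuclideanSpace ℝ (Fin n) → Ω → EReal)
    (hhatNI : IsNormalIntegrand G hhat)
    (htest : ∀ x : Ω → EuclideanSpace ℝ (Fin n), Measurable[G] x →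
      (∃ C, ∀ ω, ‖x ω‖ ≤ C) →
      IsCondExpER μ G (fun ω => h (x ω) ω) (fun ω => hhat (x ω) ω)) :
    IsCondNI μ G h hhat ∧
    (∀ h₂ : EuclideanSpace ℝ (Fin n) → Ω → EReal,
      IsNormalIntegrand mΩ h₂ → LBounded μ h₂ →
      (∀ x : Ω → EuclideanSpace ℝ (Fin n), Measurable[G] x →
        (∃ C, ∀ ω, ‖x ω‖ ≤ C) → Measurable[G] fun ω => h₂ (x ω) ω) →
      ∀ x : Ω → EuclideanSpace ℝ (Fin n), Measurable[G] x →
        QuasiIntegrable μ (fun ω => h₂ (x ω) ω) →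
        IsCondExpER μ G (fun ω => h₂ (x ω) ω) (fun ω => h₂ (x ω) ω)) :=
  statement4_general μ G hG n h hNI hhat hhatNI htest

end PaperDP
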